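/- Let λ > 0, φ as above, and ψ(t,x,y) the associated kernel. Then there is a constant C = C(λ, φ) such that for all t, x, y > 0 with |x−y| < t, one has |ψ(t,x,y)| ≤ C / m_λ(I(x,t)), where m_λ(I(x,t)) = ∫_{(x−t,x+t)∩ℝ₊} u^{2λ} du. -/

import Mathlib

noncomputable section
open MeasureTheory Set

/-- The constant `c_λ = Γ(λ+1/2)/(Γ(λ)√π)`. -/
def cLam (lam : ℝ) : ℝ := Real.Gamma (lam + 1 / 2) / (Real.Gamma lam * Real.sqrt Real.pi)

/-- Area of the Euclidean triangle with side lengths `x, y, z` (Heron's formula). -/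
def triArea (x y z : ℝ) : ℝ :=
  Real.sqrt (((x + y + z) / 2) * ((x + y + z) / 2 - x) * ((x + y + z) / 2 - y)
    * ((x + y + z) / 2 - z))

/-- The Hankel convolution kernel `D(x,y,z)`. -/
def DKer (lam x y z : ℝ) : ℝ :=
  if x < y + z ∧ y < x + z ∧ z < x + y then
    cLam lam * (2 : ℝ) ^ (2 * lam - 2) * (x * y * z) ^ (1 - 2 * lam)
      * (triArea x y z) ^ (2 * lam - 2)
  else 0

lemma cLam_pos {lam : ℝ} (h : 0 < lam) : 0 < cLam lam := by
  have h1 : 0 < Real.Gamma (lam + 1 / 2) := Real.Gamma_pos_of_pos (by linarith)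
  have h2 : 0 < Real.Gamma lam := Real.Gamma_pos_of_pos h
  have h3 : 0 < Real.sqrt Real.pi := Real.sqrt_pos.2 Real.pi_pos
  exact div_pos h1 (mul_pos h2 h3)

lemma DKer_nonneg {lam w y z : ℝ} (hlam : 0 < lam) (hw : 0 ≤ w) (hy : 0 ≤ y) (hz : 0 ≤ z) :
    0 ≤ DKer lam w y z := by
  unfold DKer
  split
  · have := cLam_pos hlam
    have h1 : (0:ℝ) ≤ (2 : ℝ) ^ (2 * lam - 2) := (Real.rpow_pos_of_pos two_pos _).le
    have h2 : (0:ℝ) ≤ (w * y * z) ^ (1 - 2 * lam) := Real.rpow_nonneg (by positivity) _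
    have h3 : (0:ℝ) ≤ (triArea w y z) ^ (2 * lam - 2) := Real.rpow_nonneg (Real.sqrt_nonneg _) _
    positivity
  · exact le_refl 0

lemma DKer_mul_eq {lam w y z : ℝ} (hw : 0 < w) (hy : 0 < y) (hz : 0 < z)
    (h1 : |y - z| < w) (h2 : w < y + z) :
    DKer lam w y z * w ^ (2 * lam)
      = (cLam lam * (2:ℝ) ^ (2 * lam - 2) / (16:ℝ) ^ (lam - 1)) * (y * z) ^ (1 - 2 * lam)
        * (w * (((y + z) ^ 2 - w ^ 2) ^ (lam - 1) * ((w ^ 2 - (y - z) ^ 2) ^ (lam - 1)))) := by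
  have habs := abs_lt.1 h1
  have htri : w < y + z ∧ y < w + z ∧ z < w + y :=
    ⟨h2, by linarith [habs.1, habs.2], by linarith [habs.1, habs.2]⟩
  have hq1 : 0 < (y + z) ^ 2 - w ^ 2 := by nlinarith
  have hq2 : 0 < w ^ 2 - (y - z) ^ 2 := by nlinarith [abs_lt.1 h1]
  have hQ : 0 < ((y + z) ^ 2 - w ^ 2) * (w ^ 2 - (y - z) ^ 2) := mul_pos hq1 hq2
  have hheron : ((w + y + z) / 2) * ((w + y + z) / 2 - w) * ((w + y + z) / 2 - y)
      * ((w + y + z) / 2 - z)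
      = (((y + z) ^ 2 - w ^ 2) * (w ^ 2 - (y - z) ^ 2)) / 16 := by ring
  have htria : triArea w y z
      = ((((y + z) ^ 2 - w ^ 2) * (w ^ 2 - (y - z) ^ 2)) / 16) ^ (1/2 : ℝ) := by
    rw [triArea, hheron, Real.sqrt_eq_rpow]
  have hpow : (triArea w y z) ^ (2 * lam - 2)
      = ((((y + z) ^ 2 - w ^ 2) * (w ^ 2 - (y - z) ^ 2)) / 16) ^ (lam - 1) := by
    rw [htria, ← Real.rpow_mul (by positivity)]
    congr 1
    ring
  have hsplit : ((((y + z) ^ 2 - w ^ 2) * (w ^ 2 - (y - z) ^ 2)) / 16) ^ (lam - 1)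
      = ((y + z) ^ 2 - w ^ 2) ^ (lam - 1) * (w ^ 2 - (y - z) ^ 2) ^ (lam - 1)
        / (16:ℝ) ^ (lam - 1) := by
    rw [Real.div_rpow hQ.le (by norm_num), Real.mul_rpow hq1.le hq2.le]
  have hw3 : (w * y * z) ^ (1 - 2 * lam) = w ^ (1 - 2 * lam) * (y * z) ^ (1 - 2 * lam) := by
    rw [mul_assoc, Real.mul_rpow hw.le (by positivity)]
  have hww : w ^ (1 - 2 * lam) * w ^ (2 * lam) = w := by
    rw [← Real.rpow_add hw]; norm_num
  rw [DKer, if_pos htri, hpow, hsplit, hw3]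
  linear_combination (cLam lam * (2:ℝ) ^ (2 * lam - 2) / (16:ℝ) ^ (lam - 1)
    * (y * z) ^ (1 - 2 * lam)
    * (((y + z) ^ 2 - w ^ 2) ^ (lam - 1) * ((w ^ 2 - (y - z) ^ 2) ^ (lam - 1)))) * hww

lemma rpow_le_max {e a b q : ℝ} (ha : 0 < a) (h1 : a ≤ q) (h2 : q ≤ b) :
    q ^ e ≤ max (a ^ e) (b ^ e) := by
  rcases le_total 0 e with he | he
  · exact le_max_of_le_right (Real.rpow_le_rpow (ha.le.trans h1) h2 he)
  · exact le_max_of_le_left (Real.rpow_le_rpow_of_nonpos ha h1 he)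

lemma sq_rpow {x : ℝ} (hx : 0 ≤ x) (e : ℝ) : (x ^ 2) ^ e = x ^ (2 * e) := by
  rw [← Real.rpow_natCast x 2, ← Real.rpow_mul hx]
  norm_num

def Kcoef (lam : ℝ) : ℝ := cLam lam * (2:ℝ) ^ (2*lam-2) / (16:ℝ) ^ (lam-1)

def KhA (lam : ℝ) : ℝ := Kcoef lam * (max ((2:ℝ)^(lam-1)) ((4:ℝ)^(lam-1)) * (2:ℝ)^lam) / lam

def KhB (lam : ℝ) : ℝ := Kcoef lam * (max ((2:ℝ)^(lam-1)) (((25/4):ℝ)^(lam-1))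
    * max (((1/2):ℝ)^(1-2*lam)) (((3/2):ℝ)^(1-2*lam))) / (2*lam)

def Kh (lam : ℝ) : ℝ := KhA lam * (4:ℝ)^lam + KhB lam

lemma Kcoef_pos {lam : ℝ} (h : 0 < lam) : 0 < Kcoef lam := by
  have := cLam_pos h
  have h1 : (0:ℝ) < (2 : ℝ) ^ (2 * lam - 2) := Real.rpow_pos_of_pos two_pos _
  have h2 : (0:ℝ) < (16 : ℝ) ^ (lam - 1) := Real.rpow_pos_of_pos (by norm_num) _
  exact div_pos (mul_pos this h1) h2

lemma KhA_pos {lam : ℝ} (h : 0 < lam) : 0 < KhA lam := by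
  have h1 := Kcoef_pos h
  have h2 : (0:ℝ) < max ((2:ℝ)^(lam-1)) ((4:ℝ)^(lam-1)) :=
    lt_max_of_lt_left (Real.rpow_pos_of_pos two_pos _)
  have h3 : (0:ℝ) < (2:ℝ)^lam := Real.rpow_pos_of_pos two_pos _
  exact div_pos (mul_pos h1 (mul_pos h2 h3)) h

lemma KhB_pos {lam : ℝ} (h : 0 < lam) : 0 < KhB lam := by
  have h1 := Kcoef_pos h
  have h2 : (0:ℝ) < max ((2:ℝ)^(lam-1)) (((25/4):ℝ)^(lam-1)) :=
    lt_max_of_lt_left (Real.rpow_pos_of_pos two_pos _)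
  have h3 : (0:ℝ) < max (((1/2):ℝ)^(1-2*lam)) (((3/2):ℝ)^(1-2*lam)) :=
    lt_max_of_lt_left (Real.rpow_pos_of_pos (by norm_num) _)
  exact div_pos (mul_pos h1 (mul_pos h2 h3)) (by linarith)

lemma Kh_pos {lam : ℝ} (h : 0 < lam) : 0 < Kh lam :=
  add_pos (mul_pos (KhA_pos h) (Real.rpow_pos_of_pos (by norm_num) _)) (KhB_pos h)

/-- FTC via change of variables: `∫_{(δ,b)} w (w²-δ²)^{λ-1} dw = (b²-δ²)^λ/(2λ)`. -/
lemma subst_sq {lam : ℝ} (hlam : 0 < lam) {δ b : ℝ} (hδ : 0 ≤ δ) (hb : δ ≤ b) :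
    IntegrableOn (fun w => w * (w ^ 2 - δ ^ 2) ^ (lam - 1)) (Ioo δ b) ∧
    ∫ w in Ioo δ b, w * (w ^ 2 - δ ^ 2) ^ (lam - 1) = (b ^ 2 - δ ^ 2) ^ lam / (2 * lam) := by
  rcases eq_or_lt_of_le hb with rfl | hlt
  · simp [Real.zero_rpow hlam.ne']
  have hb0 : 0 ≤ b := hδ.trans hb
  set c : ℝ := b ^ 2 - δ ^ 2 with hc
  have hcpos : 0 < c := by have : δ ^ 2 < b ^ 2 := by nlinarith
                           simp [hc]; nlinarith
  have himg : (fun w => w ^ 2 - δ ^ 2) '' Ioo δ b = Ioo 0 c := by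
    ext u
    constructor
    · rintro ⟨w, hw, rfl⟩
      refine ⟨?_, ?_⟩ <;> simp only [hc] <;> nlinarith [hw.1, hw.2, hδ]
    · rintro ⟨hu0, huc⟩
      refine ⟨Real.sqrt (u + δ ^ 2), ⟨?_, ?_⟩, ?_⟩
      · have h1 : δ ^ 2 < u + δ ^ 2 := by linarith
        calc δ = Real.sqrt (δ ^ 2) := by rw [Real.sqrt_sq hδ]
        _ < Real.sqrt (u + δ ^ 2) := Real.sqrt_lt_sqrt (sq_nonneg δ) h1
      · have h2 : u + δ ^ 2 < b ^ 2 := by simp [hc] at huc; linarith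
        calc Real.sqrt (u + δ ^ 2) < Real.sqrt (b ^ 2) :=
              Real.sqrt_lt_sqrt (by positivity) h2
        _ = b := Real.sqrt_sq hb0
      · simp only
        rw [Real.sq_sqrt (by positivity)]; ring
  have hder : ∀ w ∈ Ioo δ b, HasDerivWithinAt (fun w => w ^ 2 - δ ^ 2) (2 * w) (Ioo δ b) w := by
    intro w _
    have : HasDerivAt (fun w : ℝ => w ^ 2 - δ ^ 2) (2 * w) w := by
      simpa using (hasDerivAt_pow 2 w).sub_const (δ ^ 2)
    exact this.hasDerivWithinAt
  have hinj : InjOn (fun w => w ^ 2 - δ ^ 2) (Ioo δ b) := by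
    intro a ha a' ha' h
    have h1 : a ^ 2 = a' ^ 2 := by simpa using h
    nlinarith [ha.1, ha'.1, ha.2, ha'.2]
  have hint0 : IntegrableOn (fun u : ℝ => u ^ (lam - 1)) (Ioo 0 c) := by
    have := (intervalIntegral.intervalIntegrable_rpow' (a := 0) (b := c)
      (show (-1 : ℝ) < lam - 1 by linarith)).1
    exact this.mono_set Ioo_subset_Ioc_self
  have hkey := integral_image_eq_integral_abs_deriv_smul measurableSet_Ioo hder hinj
      (fun u : ℝ => u ^ (lam - 1))
  have hIm : IntegrableOn (fun w : ℝ => |2 * w| • ((w ^ 2 - δ ^ 2) ^ (lam - 1))) (Ioo δ b) := by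
    have h := (integrableOn_image_iff_integrableOn_abs_deriv_smul measurableSet_Ioo hder hinj
      (fun u : ℝ => u ^ (lam - 1))).1 (by rwa [himg])
    simpa using h
  have heq : EqOn (fun w : ℝ => (1 / 2 : ℝ) * (|2 * w| • ((w ^ 2 - δ ^ 2) ^ (lam - 1))))
      (fun w => w * (w ^ 2 - δ ^ 2) ^ (lam - 1)) (Ioo δ b) := by
    intro w hw
    have hw0 : 0 < w := lt_of_le_of_lt hδ hw.1
    simp only [smul_eq_mul, abs_of_pos (by linarith : (0:ℝ) < 2 * w)]
    ring
  have h2 : IntegrableOn (fun w : ℝ => (1 / 2 : ℝ) * (|2 * w| • ((w ^ 2 - δ ^ 2) ^ (lam - 1))))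
      (Ioo δ b) := hIm.const_mul (1 / 2)
  have hint : IntegrableOn (fun w => w * (w ^ 2 - δ ^ 2) ^ (lam - 1)) (Ioo δ b) :=
    h2.congr_fun heq measurableSet_Ioo
  refine ⟨hint, ?_⟩
  have hlhs : ∫ u in Ioo 0 c, u ^ (lam - 1) = c ^ lam / lam := by
    rw [← MeasureTheory.integral_Ioc_eq_integral_Ioo,
      ← intervalIntegral.integral_of_le hcpos.le,
      integral_rpow (Or.inl (by linarith : (-1:ℝ) < lam - 1))]
    rw [Real.zero_rpow (by linarith : lam - 1 + 1 ≠ 0)]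
    ring_nf
  rw [himg] at hkey
  have : ∫ w in Ioo δ b, w * (w ^ 2 - δ ^ 2) ^ (lam - 1)
      = (1 / 2 : ℝ) * ∫ w in Ioo δ b, |2 * w| • ((w ^ 2 - δ ^ 2) ^ (lam - 1)) := by
    rw [← integral_const_mul]
    exact (setIntegral_congr_fun measurableSet_Ioo heq).symm
  rw [this, ← hkey, hlhs]
  field_simp

lemma subst_sq' {lam : ℝ} (hlam : 0 < lam) {a σ : ℝ} (ha : 0 ≤ a) (hb : a ≤ σ) :
    IntegrableOn (fun w => w * (σ ^ 2 - w ^ 2) ^ (lam - 1)) (Ioo a σ) ∧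
    ∫ w in Ioo a σ, w * (σ ^ 2 - w ^ 2) ^ (lam - 1) = (σ ^ 2 - a ^ 2) ^ lam / (2 * lam) := by
  rcases eq_or_lt_of_le hb with rfl | hlt
  · simp [Real.zero_rpow hlam.ne']
  have hσ0 : 0 ≤ σ := ha.trans hb
  set c : ℝ := σ ^ 2 - a ^ 2 with hc
  have hcpos : 0 < c := by simp only [hc]; nlinarith
  have himg : (fun w => σ ^ 2 - w ^ 2) '' Ioo a σ = Ioo 0 c := by
    ext u
    constructor
    · rintro ⟨w, hw, rfl⟩
      refine ⟨?_, ?_⟩ <;> simp only [hc] <;> nlinarith [hw.1, hw.2, ha]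
    · rintro ⟨hu0, huc⟩
      have h1 : a ^ 2 < σ ^ 2 - u := by simp only [hc] at huc; linarith
      have h2 : σ ^ 2 - u < σ ^ 2 := by linarith
      refine ⟨Real.sqrt (σ ^ 2 - u), ⟨?_, ?_⟩, ?_⟩
      · calc a = Real.sqrt (a ^ 2) := by rw [Real.sqrt_sq ha]
        _ < Real.sqrt (σ ^ 2 - u) := Real.sqrt_lt_sqrt (sq_nonneg a) h1
      · calc Real.sqrt (σ ^ 2 - u) < Real.sqrt (σ ^ 2) :=
              Real.sqrt_lt_sqrt (by nlinarith) h2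
        _ = σ := Real.sqrt_sq hσ0
      · simp only
        rw [Real.sq_sqrt (by nlinarith)]; ring
  have hder : ∀ w ∈ Ioo a σ, HasDerivWithinAt (fun w => σ ^ 2 - w ^ 2) (-(2 * w)) (Ioo a σ) w := by
    intro w _
    have : HasDerivAt (fun w : ℝ => σ ^ 2 - w ^ 2) (-(2 * w)) w := by
      simpa using (hasDerivAt_pow 2 w).const_sub (σ ^ 2)
    exact this.hasDerivWithinAt
  have hinj : InjOn (fun w => σ ^ 2 - w ^ 2) (Ioo a σ) := by
    intro p hp q hq h
    have h1 : p ^ 2 = q ^ 2 := by simp only at h; linarith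
    nlinarith [hp.1, hq.1, hp.2, hq.2]
  have hint0 : IntegrableOn (fun u : ℝ => u ^ (lam - 1)) (Ioo 0 c) := by
    have := (intervalIntegral.intervalIntegrable_rpow' (a := 0) (b := c)
      (show (-1 : ℝ) < lam - 1 by linarith)).1
    exact this.mono_set Ioo_subset_Ioc_self
  have hkey := integral_image_eq_integral_abs_deriv_smul measurableSet_Ioo hder hinj
      (fun u : ℝ => u ^ (lam - 1))
  have hIm : IntegrableOn (fun w : ℝ => |-(2 * w)| • ((σ ^ 2 - w ^ 2) ^ (lam - 1))) (Ioo a σ) := by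
    have h := (integrableOn_image_iff_integrableOn_abs_deriv_smul measurableSet_Ioo hder hinj
      (fun u : ℝ => u ^ (lam - 1))).1 (by rwa [himg])
    simpa using h
  have heq : EqOn (fun w : ℝ => (1 / 2 : ℝ) * (|-(2 * w)| • ((σ ^ 2 - w ^ 2) ^ (lam - 1))))
      (fun w => w * (σ ^ 2 - w ^ 2) ^ (lam - 1)) (Ioo a σ) := by
    intro w hw
    have hw0 : 0 < w := lt_of_le_of_lt ha hw.1
    simp only [smul_eq_mul, abs_neg, abs_of_pos (by linarith : (0:ℝ) < 2 * w)]
    ring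
  have h2 : IntegrableOn (fun w : ℝ => (1 / 2 : ℝ) * (|-(2 * w)| • ((σ ^ 2 - w ^ 2) ^ (lam - 1))))
      (Ioo a σ) := hIm.const_mul (1 / 2)
  have hint : IntegrableOn (fun w => w * (σ ^ 2 - w ^ 2) ^ (lam - 1)) (Ioo a σ) :=
    h2.congr_fun heq measurableSet_Ioo
  refine ⟨hint, ?_⟩
  have hlhs : ∫ u in Ioo 0 c, u ^ (lam - 1) = c ^ lam / lam := by
    rw [← MeasureTheory.integral_Ioc_eq_integral_Ioo,
      ← intervalIntegral.integral_of_le hcpos.le,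
      integral_rpow (Or.inl (by linarith : (-1:ℝ) < lam - 1))]
    rw [Real.zero_rpow (by linarith : lam - 1 + 1 ≠ 0)]
    ring_nf
  rw [himg] at hkey
  have : ∫ w in Ioo a σ, w * (σ ^ 2 - w ^ 2) ^ (lam - 1)
      = (1 / 2 : ℝ) * ∫ w in Ioo a σ, |-(2 * w)| • ((σ ^ 2 - w ^ 2) ^ (lam - 1)) := by
    rw [← integral_const_mul]
    exact (setIntegral_congr_fun measurableSet_Ioo heq).symm
  rw [this, ← hkey, hlhs]
  field_simp

lemma sq_le_sq'' {a b : ℝ} (h0 : 0 ≤ a) (h : a ≤ b) : a ^ 2 ≤ b ^ 2 := by nlinarith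

lemma min_nonneg' {lam x z : ℝ} (hxz : 0 ≤ x / z) : 0 ≤ min 1 ((x / z) ^ (2 * lam)) :=
  le_min (by norm_num) (Real.rpow_nonneg hxz _)

set_option maxHeartbeats 1000000 in
/-- Core bound: the inner `w`-integral is controlled by `Kh lam * min 1 ((x/z)^{2λ})`. -/
lemma hKey {lam : ℝ} (hlam : 0 < lam) {x y z : ℝ} (hx : 0 < x) (hy : 0 < y) (hz : 0 < z)
    (c : ℝ) :
    ‖∫ w in Ioo (0:ℝ) x, DKer lam w y z * c * w ^ (2 * lam)‖
      ≤ Kh lam * min 1 ((x / z) ^ (2 * lam)) * ‖c‖ := by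
  have hyz : (0:ℝ) < y * z := mul_pos hy hz
  set δ : ℝ := |y - z| with hδdef
  have hδ0 : 0 ≤ δ := abs_nonneg _
  have hδσ : δ ≤ y + z := by
    rw [hδdef, abs_le]; constructor <;> linarith
  have hδsq : δ ^ 2 = (y - z) ^ 2 := sq_abs _
  have h4yz : (y + z) ^ 2 - δ ^ 2 = 4 * (y * z) := by rw [hδsq]; ring
  have hK0 := Kcoef_pos hlam
  have hnorm : ∀ w : ℝ, w ∈ Ioo (0:ℝ) x →
      ‖DKer lam w y z * c * w ^ (2 * lam)‖ = DKer lam w y z * w ^ (2 * lam) * ‖c‖ := by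
    intro w hw
    rw [norm_mul, norm_mul, Real.norm_eq_abs (DKer lam w y z), Real.norm_eq_abs (w ^ (2*lam)),
      abs_of_nonneg (DKer_nonneg hlam hw.1.le hy.le hz.le),
      abs_of_nonneg (Real.rpow_nonneg hw.1.le _)]
    ring
  have hstep1 := norm_integral_le_integral_norm
    (μ := volume.restrict (Ioo (0:ℝ) x)) (f := fun w => DKer lam w y z * c * w ^ (2 * lam))
  rcases le_or_gt z (2 * x) with hcase | hcase
  -- Case A : z ≤ 2x, use the uniform bound
  · set w₀ : ℝ := Real.sqrt ((δ ^ 2 + (y + z) ^ 2) / 2) with hw₀def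
    have hw₀sq : w₀ ^ 2 = (δ ^ 2 + (y + z) ^ 2) / 2 := Real.sq_sqrt (by positivity)
    have hδw₀ : δ ≤ w₀ := by
      have h : δ ^ 2 ≤ (δ ^ 2 + (y + z) ^ 2) / 2 := by linarith [sq_le_sq'' hδ0 hδσ]
      calc δ = Real.sqrt (δ ^ 2) := (Real.sqrt_sq hδ0).symm
        _ ≤ w₀ := Real.sqrt_le_sqrt h
    have hw₀σ : w₀ ≤ y + z := by
      have h : (δ ^ 2 + (y + z) ^ 2) / 2 ≤ (y + z) ^ 2 := by linarith [sq_le_sq'' hδ0 hδσ]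
      calc w₀ ≤ Real.sqrt ((y + z) ^ 2) := Real.sqrt_le_sqrt h
        _ = y + z := Real.sqrt_sq (by linarith)
    have hw₀0 : 0 ≤ w₀ := hδ0.trans hδw₀
    set a₁ : ℝ := max ((2:ℝ)^(lam-1)) ((4:ℝ)^(lam-1)) with ha₁def
    have ha₁pos : 0 < a₁ := lt_max_of_lt_left (Real.rpow_pos_of_pos two_pos _)
    set CA : ℝ := Kcoef lam * a₁ * (y*z) ^ (-lam) * ‖c‖ with hCAdef
    have hCA0 : 0 ≤ CA := by
      have : (0:ℝ) ≤ (y*z) ^ (-lam) := Real.rpow_nonneg hyz.le _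
      positivity
    obtain ⟨hint1, hval1⟩ := subst_sq hlam hδ0 hδw₀
    obtain ⟨hint2, hval2⟩ := subst_sq' hlam hw₀0 hw₀σ
    set p1 : ℝ → ℝ := fun w => w * (w ^ 2 - δ ^ 2) ^ (lam - 1) with hp1def
    set p2 : ℝ → ℝ := fun w => w * ((y+z) ^ 2 - w ^ 2) ^ (lam - 1) with hp2def
    set g : ℝ → ℝ := fun w => CA * ((Ioo δ w₀).indicator p1 w + (Ioo w₀ (y+z)).indicator p2 w)
      with hgdef
    have hg0 : ∀ w, 0 ≤ g w := by
      intro w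
      have h1 : 0 ≤ (Ioo δ w₀).indicator p1 w := by
        apply Set.indicator_nonneg
        intro a ha
        exact mul_nonneg (hδ0.trans ha.1.le) (Real.rpow_nonneg (by linarith [sq_le_sq'' hδ0 ha.1.le]) _)
      have h2 : 0 ≤ (Ioo w₀ (y+z)).indicator p2 w := by
        apply Set.indicator_nonneg
        intro a ha
        exact mul_nonneg (hw₀0.trans ha.1.le) (Real.rpow_nonneg (by linarith [sq_le_sq'' (hw₀0.trans ha.1.le) ha.2.le]) _)
      exact mul_nonneg hCA0 (by linarith)
    have hgint : Integrable g (volume.restrict (Ioo (0:ℝ) x)) := by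
      have hi1 : Integrable ((Ioo δ w₀).indicator p1) volume :=
        (integrable_indicator_iff measurableSet_Ioo).2 hint1
      have hi2 : Integrable ((Ioo w₀ (y+z)).indicator p2) volume :=
        (integrable_indicator_iff measurableSet_Ioo).2 hint2
      exact ((hi1.add hi2).const_mul CA).restrict
    -- pointwise a.e. domination
    have haew : ∀ᵐ w ∂(volume.restrict (Ioo (0:ℝ) x)), w ≠ w₀ := by
      refine ae_restrict_of_ae ?_
      refine ae_iff.2 ?_
      have : {w : ℝ | ¬ w ≠ w₀} = {w₀} := by ext w; simp
      rw [this, Real.volume_singleton]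
    have hdom : (fun w => ‖DKer lam w y z * c * w ^ (2 * lam)‖)
        ≤ᵐ[volume.restrict (Ioo (0:ℝ) x)] g := by
      filter_upwards [haew, ae_restrict_mem measurableSet_Ioo] with w hww₀ hw
      rw [hnorm w hw]
      by_cases htri : w < y + z ∧ y < w + z ∧ z < w + y
      · have hδw : δ < w := by
          rw [hδdef, abs_lt]; constructor <;> [linarith [htri.2.1]; linarith [htri.2.2]]
        have hwσ : w < y + z := htri.1
        rw [DKer_mul_eq hw.1 hy hz (hδdef ▸ hδw) hwσ, ← hδsq]
        have hprod : (y*z) ^ (1-2*lam) * ((y*z) ^ (lam-1)) = (y*z) ^ (-lam) := by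
          rw [← Real.rpow_add hyz]; congr 1; ring
        rcases lt_or_gt_of_ne hww₀ with hlt | hgt
        · have hq2n : (0:ℝ) ≤ w ^ 2 - δ ^ 2 := by linarith [sq_le_sq'' hδ0 hδw.le]
          have hq1l : 2 * (y*z) ≤ (y+z) ^ 2 - w ^ 2 := by
            have h := sq_le_sq'' hw.1.le hlt.le
            linarith [hw₀sq, h4yz]
          have hq1u : (y+z) ^ 2 - w ^ 2 ≤ 4 * (y*z) := by
            linarith [sq_le_sq'' hδ0 hδw.le, h4yz]
          have hq1b : ((y+z) ^ 2 - w ^ 2) ^ (lam-1) ≤ a₁ * (y*z) ^ (lam-1) := by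
            calc ((y+z) ^ 2 - w ^ 2) ^ (lam-1)
                ≤ max ((2*(y*z)) ^ (lam-1)) ((4*(y*z)) ^ (lam-1)) :=
                  rpow_le_max (by positivity) hq1l hq1u
              _ = a₁ * (y*z) ^ (lam-1) := by
                  rw [Real.mul_rpow (by norm_num) hyz.le, Real.mul_rpow (by norm_num) hyz.le,
                    ha₁def, max_mul_of_nonneg _ _ (Real.rpow_nonneg hyz.le _)]
          have hmem1 : w ∈ Ioo δ w₀ := ⟨hδw, hlt⟩
          have hnot2 : w ∉ Ioo w₀ (y+z) := fun h => absurd h.1 (not_lt.2 hlt.le)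
          rw [hgdef]
          simp only [Set.indicator_of_mem hmem1, Set.indicator_of_notMem hnot2, add_zero]
          have hfac : (0:ℝ) ≤ Kcoef lam * w * ((w ^ 2 - δ ^ 2) ^ (lam-1)) * ‖c‖ :=
            mul_nonneg (mul_nonneg (mul_nonneg hK0.le hw.1.le)
              (Real.rpow_nonneg hq2n _)) (norm_nonneg c)
          calc Kcoef lam * (y * z) ^ (1 - 2 * lam)
                * (w * (((y + z) ^ 2 - w ^ 2) ^ (lam - 1) * ((w ^ 2 - δ ^ 2) ^ (lam - 1)))) * ‖c‖
              = (((y+z) ^ 2 - w ^ 2) ^ (lam-1))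
                  * ((y * z) ^ (1 - 2 * lam) * (Kcoef lam * w * ((w ^ 2 - δ ^ 2) ^ (lam-1)) * ‖c‖))
                := by ring
            _ ≤ (a₁ * (y*z) ^ (lam-1))
                  * ((y * z) ^ (1 - 2 * lam) * (Kcoef lam * w * ((w ^ 2 - δ ^ 2) ^ (lam-1)) * ‖c‖))
                := by
                  apply mul_le_mul_of_nonneg_right hq1b
                  exact mul_nonneg (Real.rpow_nonneg hyz.le _) hfac
            _ = CA * (p1 w) := by
                  rw [hCAdef, hp1def]
                  linear_combination (a₁ * Kcoef lam * w * ((w ^ 2 - δ ^ 2) ^ (lam-1)) * ‖c‖) * hprod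
        · -- w₀ < w
          have hq1n : (0:ℝ) ≤ (y+z) ^ 2 - w ^ 2 := by
            linarith [sq_le_sq'' hw.1.le hwσ.le]
          have hq2l : 2 * (y*z) ≤ w ^ 2 - δ ^ 2 := by
            have h := sq_le_sq'' hw₀0 hgt.le
            linarith [hw₀sq, h4yz]
          have hq2u : w ^ 2 - δ ^ 2 ≤ 4 * (y*z) := by
            linarith [sq_le_sq'' hw.1.le hwσ.le, h4yz]
          have hq2b : (w ^ 2 - δ ^ 2) ^ (lam-1) ≤ a₁ * (y*z) ^ (lam-1) := by
            calc (w ^ 2 - δ ^ 2) ^ (lam-1)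
                ≤ max ((2*(y*z)) ^ (lam-1)) ((4*(y*z)) ^ (lam-1)) :=
                  rpow_le_max (by positivity) hq2l hq2u
              _ = a₁ * (y*z) ^ (lam-1) := by
                  rw [Real.mul_rpow (by norm_num) hyz.le, Real.mul_rpow (by norm_num) hyz.le,
                    ha₁def, max_mul_of_nonneg _ _ (Real.rpow_nonneg hyz.le _)]
          have hmem2 : w ∈ Ioo w₀ (y+z) := ⟨hgt, hwσ⟩
          have hnot1 : w ∉ Ioo δ w₀ := fun h => absurd h.2 (not_lt.2 hgt.le)
          rw [hgdef]
          simp only [Set.indicator_of_mem hmem2, Set.indicator_of_notMem hnot1, zero_add]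
          have hfac : (0:ℝ) ≤ Kcoef lam * w * (((y+z) ^ 2 - w ^ 2) ^ (lam-1)) * ‖c‖ :=
            mul_nonneg (mul_nonneg (mul_nonneg hK0.le hw.1.le)
              (Real.rpow_nonneg hq1n _)) (norm_nonneg c)
          calc Kcoef lam * (y * z) ^ (1 - 2 * lam)
                * (w * (((y + z) ^ 2 - w ^ 2) ^ (lam - 1) * ((w ^ 2 - δ ^ 2) ^ (lam - 1)))) * ‖c‖
              = ((w ^ 2 - δ ^ 2) ^ (lam-1))
                  * ((y * z) ^ (1 - 2 * lam)
                    * (Kcoef lam * w * (((y+z) ^ 2 - w ^ 2) ^ (lam-1)) * ‖c‖)) := by ring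
            _ ≤ (a₁ * (y*z) ^ (lam-1))
                  * ((y * z) ^ (1 - 2 * lam)
                    * (Kcoef lam * w * (((y+z) ^ 2 - w ^ 2) ^ (lam-1)) * ‖c‖)) := by
                  apply mul_le_mul_of_nonneg_right hq2b
                  exact mul_nonneg (Real.rpow_nonneg hyz.le _) hfac
            _ = CA * (p2 w) := by
                  rw [hCAdef, hp2def]
                  linear_combination (a₁ * Kcoef lam * w
                    * (((y+z) ^ 2 - w ^ 2) ^ (lam-1)) * ‖c‖) * hprod
      · rw [DKer, if_neg htri]
        simpa using hg0 w
    have hstep2 : ∫ w in Ioo (0:ℝ) x, ‖DKer lam w y z * c * w ^ (2 * lam)‖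
        ≤ ∫ w in Ioo (0:ℝ) x, g w :=
      integral_mono_of_nonneg (Filter.Eventually.of_forall fun w => norm_nonneg _) hgint hdom
    -- compute / bound ∫ g
    have hI1 : ∫ w in Ioo (0:ℝ) x, (Ioo δ w₀).indicator p1 w ≤ (2*(y*z)) ^ lam / (2*lam) := by
      rw [integral_indicator measurableSet_Ioo, Measure.restrict_restrict measurableSet_Ioo]
      have hsub : ∫ w in Ioo δ w₀ ∩ Ioo (0:ℝ) x, p1 w ≤ ∫ w in Ioo δ w₀, p1 w := by
        apply setIntegral_mono_set hint1
        · filter_upwards [ae_restrict_mem measurableSet_Ioo] with w hw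
          exact mul_nonneg (hδ0.trans hw.1.le) (Real.rpow_nonneg (by linarith [sq_le_sq'' hδ0 hw.1.le]) _)
        · exact HasSubset.Subset.eventuallyLE inter_subset_left
      refine hsub.trans ?_
      rw [hval1]
      have : w₀ ^ 2 - δ ^ 2 = 2*(y*z) := by linarith [hw₀sq, h4yz]
      rw [this]
    have hI2 : ∫ w in Ioo (0:ℝ) x, (Ioo w₀ (y+z)).indicator p2 w ≤ (2*(y*z)) ^ lam / (2*lam) := by
      rw [integral_indicator measurableSet_Ioo, Measure.restrict_restrict measurableSet_Ioo]
      have hsub : ∫ w in Ioo w₀ (y+z) ∩ Ioo (0:ℝ) x, p2 w ≤ ∫ w in Ioo w₀ (y+z), p2 w := by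
        apply setIntegral_mono_set hint2
        · filter_upwards [ae_restrict_mem measurableSet_Ioo] with w hw
          exact mul_nonneg (hw₀0.trans hw.1.le) (Real.rpow_nonneg (by linarith [sq_le_sq'' (hw₀0.trans hw.1.le) hw.2.le]) _)
        · exact HasSubset.Subset.eventuallyLE inter_subset_left
      refine hsub.trans ?_
      rw [hval2]
      have : (y+z) ^ 2 - w₀ ^ 2 = 2*(y*z) := by linarith [hw₀sq, h4yz]
      rw [this]
    have hIg : ∫ w in Ioo (0:ℝ) x, g w ≤ CA * ((2*(y*z)) ^ lam / lam) := by
      rw [hgdef]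
      have hi1 : Integrable ((Ioo δ w₀).indicator p1) (volume.restrict (Ioo (0:ℝ) x)) :=
        ((integrable_indicator_iff measurableSet_Ioo).2 hint1).restrict
      have hi2 : Integrable ((Ioo w₀ (y+z)).indicator p2) (volume.restrict (Ioo (0:ℝ) x)) :=
        ((integrable_indicator_iff measurableSet_Ioo).2 hint2).restrict
      rw [integral_const_mul, integral_add hi1 hi2]
      have := add_le_add hI1 hI2
      calc CA * ((∫ w in Ioo (0:ℝ) x, (Ioo δ w₀).indicator p1 w)
            + ∫ w in Ioo (0:ℝ) x, (Ioo w₀ (y+z)).indicator p2 w)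
          ≤ CA * ((2*(y*z)) ^ lam / (2*lam) + (2*(y*z)) ^ lam / (2*lam)) :=
            mul_le_mul_of_nonneg_left this hCA0
        _ = CA * ((2*(y*z)) ^ lam / lam) := by field_simp; ring
    -- final algebra for case A
    have hCAval : CA * ((2*(y*z)) ^ lam / lam) = KhA lam * ‖c‖ := by
      have hprod2 : (y*z) ^ (-lam) * (2*(y*z)) ^ lam = (2:ℝ) ^ lam := by
        rw [Real.mul_rpow (by norm_num : (0:ℝ) ≤ 2) hyz.le, mul_comm, mul_assoc,
          ← Real.rpow_add hyz, add_neg_cancel, Real.rpow_zero, mul_one]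
      rw [hCAdef, KhA]
      linear_combination (Kcoef lam * a₁ * ‖c‖ / lam) * hprod2
    have hmin : (4:ℝ) ^ (-lam) ≤ min 1 ((x / z) ^ (2 * lam)) := by
      refine le_min ?_ ?_
      · exact Real.rpow_le_one_of_one_le_of_nonpos (by norm_num) (by linarith)
      · have h12 : (1/2 : ℝ) ≤ x / z := by
          rw [div_le_div_iff₀ (by norm_num) hz]
          linarith
        have : ((1:ℝ)/2) ^ (2*lam) ≤ (x/z) ^ (2*lam) :=
          Real.rpow_le_rpow (by norm_num) h12 (by linarith)
        have h45 : ((1:ℝ)/2) ^ (2*lam) = (4:ℝ)^(-lam) := by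
          have h2 : ((1:ℝ)/2)^2 = ((4:ℝ)⁻¹) := by norm_num
          rw [← sq_rpow (by norm_num : (0:ℝ) ≤ 1/2) lam, h2,
            Real.inv_rpow (by norm_num), ← Real.rpow_neg (by norm_num)]
        exact le_trans (le_of_eq h45.symm) this
    have hfinal : KhA lam * ‖c‖ ≤ Kh lam * min 1 ((x / z) ^ (2 * lam)) * ‖c‖ := by
      have h1 : KhA lam = (KhA lam * (4:ℝ)^lam) * (4:ℝ)^(-lam) := by
        rw [mul_assoc, ← Real.rpow_add (by norm_num), add_neg_cancel, Real.rpow_zero, mul_one]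
      have h2 : (KhA lam * (4:ℝ)^lam) * (4:ℝ)^(-lam)
          ≤ (KhA lam * (4:ℝ)^lam) * min 1 ((x / z) ^ (2 * lam)) := by
        apply mul_le_mul_of_nonneg_left hmin
        exact mul_nonneg (KhA_pos hlam).le (Real.rpow_nonneg (by norm_num) _)
      have h3 : (KhA lam * (4:ℝ)^lam) * min 1 ((x / z) ^ (2 * lam))
          ≤ Kh lam * min 1 ((x / z) ^ (2 * lam)) := by
        apply mul_le_mul_of_nonneg_right _ (min_nonneg' (div_nonneg hx.le hz.le))
        rw [Kh]
        linarith [KhB_pos hlam]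
      have := (h1.le.trans h2).trans h3
      exact mul_le_mul_of_nonneg_right this (norm_nonneg c)
    calc ‖∫ w in Ioo (0:ℝ) x, DKer lam w y z * c * w ^ (2 * lam)‖
        ≤ ∫ w in Ioo (0:ℝ) x, ‖DKer lam w y z * c * w ^ (2 * lam)‖ := hstep1
      _ ≤ ∫ w in Ioo (0:ℝ) x, g w := hstep2
      _ ≤ CA * ((2*(y*z)) ^ lam / lam) := hIg
      _ = KhA lam * ‖c‖ := hCAval
      _ ≤ Kh lam * min 1 ((x / z) ^ (2 * lam)) * ‖c‖ := hfinal
  -- Case B : 2x < z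
  · rcases le_or_gt x δ with hxδ | hδx
    · -- the kernel vanishes on `Ioo 0 x`
      have hzero : EqOn (fun w => DKer lam w y z * c * w ^ (2 * lam)) (fun _ => (0:ℝ))
          (Ioo (0:ℝ) x) := by
        intro w hw
        have htri : ¬ (w < y + z ∧ y < w + z ∧ z < w + y) := by
          intro h
          have hδw : δ < w := by
            rw [hδdef, abs_lt]; constructor <;> [linarith [h.2.1]; linarith [h.2.2]]
          linarith [hw.2]
        simp only [DKer, if_neg htri, zero_mul]
      rw [setIntegral_congr_fun measurableSet_Ioo hzero, integral_zero, norm_zero]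
      exact mul_nonneg (mul_nonneg (Kh_pos hlam).le (min_nonneg' (div_nonneg hx.le hz.le)))
        (norm_nonneg c)
    · set a₂ : ℝ := max ((2:ℝ)^(lam-1)) (((25/4):ℝ)^(lam-1)) with ha₂def
      set a₃ : ℝ := max (((1/2):ℝ)^(1-2*lam)) (((3/2):ℝ)^(1-2*lam)) with ha₃def
      have hz2 : (0:ℝ) < z ^ 2 := by positivity
      set CB : ℝ := Kcoef lam * (a₂ * a₃) * (z ^ 2) ^ (-lam) * ‖c‖ with hCBdef
      have hCB0 : 0 ≤ CB := by
        have h1 : (0:ℝ) ≤ (z ^ 2) ^ (-lam) := Real.rpow_nonneg hz2.le _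
        have h2 : (0:ℝ) < a₂ := lt_max_of_lt_left (Real.rpow_pos_of_pos two_pos _)
        have h3 : (0:ℝ) < a₃ := lt_max_of_lt_left (Real.rpow_pos_of_pos (by norm_num) _)
        positivity
      obtain ⟨hint1, hval1⟩ := subst_sq hlam hδ0 hδx.le
      set p1 : ℝ → ℝ := fun w => w * (w ^ 2 - δ ^ 2) ^ (lam - 1) with hp1def
      set g : ℝ → ℝ := fun w => CB * (Ioo δ x).indicator p1 w with hgdef
      have hg0 : ∀ w, 0 ≤ g w := by
        intro w
        refine mul_nonneg hCB0 (Set.indicator_nonneg ?_ w)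
        intro a ha
        exact mul_nonneg (hδ0.trans ha.1.le) (Real.rpow_nonneg (by linarith [sq_le_sq'' hδ0 ha.1.le]) _)
      have hgint : Integrable g (volume.restrict (Ioo (0:ℝ) x)) := by
        have hi1 : Integrable ((Ioo δ x).indicator p1) volume :=
          (integrable_indicator_iff measurableSet_Ioo).2 hint1
        exact (hi1.const_mul CB).restrict
      have hdom : (fun w => ‖DKer lam w y z * c * w ^ (2 * lam)‖)
          ≤ᵐ[volume.restrict (Ioo (0:ℝ) x)] g := by
        filter_upwards [ae_restrict_mem measurableSet_Ioo] with w hw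
        rw [hnorm w hw]
        by_cases htri : w < y + z ∧ y < w + z ∧ z < w + y
        · have hδw : δ < w := by
            rw [hδdef, abs_lt]; constructor <;> [linarith [htri.2.1]; linarith [htri.2.2]]
          have hwσ : w < y + z := htri.1
          rw [DKer_mul_eq hw.1 hy hz (hδdef ▸ hδw) hwσ, ← hδsq]
          have hwz2 : w < z / 2 := by linarith [hw.2]
          have habs := abs_lt.1 (show |y - z| < w from hδdef ▸ hδw)
          have hyl : z / 2 < y := by linarith [habs.1]
          have hyu : y < 3 * z / 2 := by linarith [habs.2]
          -- bounds on q1 = (y+z)^2 - w^2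
          have hsq1 : (3*z/2) ^ 2 ≤ (y+z) ^ 2 := sq_le_sq'' (by linarith) (by linarith)
          have hsq2 : w ^ 2 ≤ (z/2) ^ 2 := sq_le_sq'' hw.1.le (by linarith)
          have hsq3 : (y+z) ^ 2 ≤ (5*z/2) ^ 2 := sq_le_sq'' (by linarith) (by linarith)
          have e1 : (3*z/2) ^ 2 = 9/4*(z^2) := by ring
          have e2 : (z/2) ^ 2 = 1/4*(z^2) := by ring
          have e3 : (5*z/2) ^ 2 = 25/4*(z^2) := by ring
          have hq1l : 2*(z^2) ≤ (y+z) ^ 2 - w ^ 2 := by linarith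
          have hq1u : (y+z) ^ 2 - w ^ 2 ≤ (25/4)*(z^2) := by linarith [sq_nonneg w]
          have hq1b : ((y+z) ^ 2 - w ^ 2) ^ (lam-1) ≤ a₂ * (z^2) ^ (lam-1) := by
            calc ((y+z) ^ 2 - w ^ 2) ^ (lam-1)
                ≤ max ((2*(z^2)) ^ (lam-1)) (((25/4)*(z^2)) ^ (lam-1)) :=
                  rpow_le_max (by positivity) hq1l hq1u
              _ = a₂ * (z^2) ^ (lam-1) := by
                  rw [Real.mul_rpow (by norm_num) hz2.le, Real.mul_rpow (by norm_num) hz2.le,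
                    ha₂def, max_mul_of_nonneg _ _ (Real.rpow_nonneg hz2.le _)]
          -- bounds on y*z
          have hyzl : (1/2)*(z^2) ≤ y*z := by
            have h := mul_le_mul_of_nonneg_right hyl.le hz.le
            have e4 : z/2*z = 1/2*(z^2) := by ring
            linarith
          have hyzu : y*z ≤ (3/2)*(z^2) := by
            have h := mul_le_mul_of_nonneg_right hyu.le hz.le
            have e5 : 3*z/2*z = 3/2*(z^2) := by ring
            linarith
          have hyzb : (y*z) ^ (1-2*lam) ≤ a₃ * (z^2) ^ (1-2*lam) := by
            calc (y*z) ^ (1-2*lam)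
                ≤ max (((1/2)*(z^2)) ^ (1-2*lam)) (((3/2)*(z^2)) ^ (1-2*lam)) :=
                  rpow_le_max (by positivity) hyzl hyzu
              _ = a₃ * (z^2) ^ (1-2*lam) := by
                  rw [Real.mul_rpow (by norm_num) hz2.le, Real.mul_rpow (by norm_num) hz2.le,
                    ha₃def, max_mul_of_nonneg _ _ (Real.rpow_nonneg hz2.le _)]
          have hq2n : (0:ℝ) ≤ w ^ 2 - δ ^ 2 := by linarith [sq_le_sq'' hδ0 hδw.le]
          have hmem1 : w ∈ Ioo δ x := ⟨hδw, hw.2⟩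
          rw [hgdef]
          simp only [Set.indicator_of_mem hmem1]
          have hR0 : (0:ℝ) ≤ Kcoef lam * w * ((w ^ 2 - δ ^ 2) ^ (lam-1)) * ‖c‖ :=
            mul_nonneg (mul_nonneg (mul_nonneg hK0.le hw.1.le)
              (Real.rpow_nonneg hq2n _)) (norm_nonneg c)
          have hprodz : (z^2) ^ (lam-1) * ((z^2) ^ (1-2*lam)) = (z^2) ^ (-lam) := by
            rw [← Real.rpow_add hz2]; congr 1; ring
          calc Kcoef lam * (y * z) ^ (1 - 2 * lam)
                * (w * (((y + z) ^ 2 - w ^ 2) ^ (lam - 1) * ((w ^ 2 - δ ^ 2) ^ (lam - 1)))) * ‖c‖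
              = (((y+z) ^ 2 - w ^ 2) ^ (lam-1) * ((y * z) ^ (1 - 2 * lam)))
                  * (Kcoef lam * w * ((w ^ 2 - δ ^ 2) ^ (lam-1)) * ‖c‖) := by ring
            _ ≤ ((a₂ * (z^2) ^ (lam-1)) * (a₃ * (z^2) ^ (1-2*lam)))
                  * (Kcoef lam * w * ((w ^ 2 - δ ^ 2) ^ (lam-1)) * ‖c‖) := by
                  apply mul_le_mul_of_nonneg_right _ hR0
                  apply mul_le_mul hq1b hyzb (Real.rpow_nonneg hyz.le _)
                  exact mul_nonneg (le_of_lt (lt_max_of_lt_left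
                    (Real.rpow_pos_of_pos two_pos _))) (Real.rpow_nonneg hz2.le _)
            _ = CB * (p1 w) := by
                  rw [hCBdef, hp1def]
                  linear_combination (a₂ * a₃ * Kcoef lam * w
                    * ((w ^ 2 - δ ^ 2) ^ (lam-1)) * ‖c‖) * hprodz
        · rw [DKer, if_neg htri]
          simpa using hg0 w
      have hstep2 : ∫ w in Ioo (0:ℝ) x, ‖DKer lam w y z * c * w ^ (2 * lam)‖
          ≤ ∫ w in Ioo (0:ℝ) x, g w :=
        integral_mono_of_nonneg (Filter.Eventually.of_forall fun w => norm_nonneg _) hgint hdom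
      have hI1 : ∫ w in Ioo (0:ℝ) x, (Ioo δ x).indicator p1 w ≤ (x^2) ^ lam / (2*lam) := by
        rw [integral_indicator measurableSet_Ioo, Measure.restrict_restrict measurableSet_Ioo]
        have hsub : ∫ w in Ioo δ x ∩ Ioo (0:ℝ) x, p1 w ≤ ∫ w in Ioo δ x, p1 w := by
          apply setIntegral_mono_set hint1
          · filter_upwards [ae_restrict_mem measurableSet_Ioo] with w hw
            exact mul_nonneg (hδ0.trans hw.1.le)
              (Real.rpow_nonneg (by linarith [sq_le_sq'' hδ0 hw.1.le]) _)
          · exact HasSubset.Subset.eventuallyLE inter_subset_left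
        refine hsub.trans ?_
        rw [hval1]
        have hle : (x ^ 2 - δ ^ 2) ^ lam ≤ (x ^ 2) ^ lam := by
          apply Real.rpow_le_rpow (by linarith [sq_le_sq'' hδ0 hδx.le]) _ hlam.le
          linarith [sq_nonneg δ]
        exact (div_le_div_iff_of_pos_right (by linarith)).2 hle
      have hIg : ∫ w in Ioo (0:ℝ) x, g w ≤ CB * ((x^2) ^ lam / (2*lam)) := by
        rw [hgdef, integral_const_mul]
        exact mul_le_mul_of_nonneg_left hI1 hCB0
      have hxz2 : (x/z) ^ (2*lam) = (x^2) ^ lam * (z^2) ^ (-lam) := by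
        rw [← sq_rpow (div_nonneg hx.le hz.le) lam, div_pow,
          Real.div_rpow (sq_nonneg x) (sq_nonneg z), Real.rpow_neg (sq_nonneg z),
          div_eq_mul_inv]
      have hCBval : CB * ((x^2) ^ lam / (2*lam)) = KhB lam * ((x/z) ^ (2*lam)) * ‖c‖ := by
        rw [hCBdef, KhB, hxz2]
        ring
      have hminB : min 1 ((x/z) ^ (2*lam)) = (x/z) ^ (2*lam) := by
        apply min_eq_right
        apply Real.rpow_le_one (div_nonneg hx.le hz.le) _ (by linarith)
        rw [div_le_one hz]
        linarith
      calc ‖∫ w in Ioo (0:ℝ) x, DKer lam w y z * c * w ^ (2 * lam)‖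
          ≤ ∫ w in Ioo (0:ℝ) x, ‖DKer lam w y z * c * w ^ (2 * lam)‖ := hstep1
        _ ≤ ∫ w in Ioo (0:ℝ) x, g w := hstep2
        _ ≤ CB * ((x^2) ^ lam / (2*lam)) := hIg
        _ = KhB lam * ((x/z) ^ (2*lam)) * ‖c‖ := hCBval
        _ ≤ Kh lam * min 1 ((x/z) ^ (2*lam)) * ‖c‖ := by
            rw [hminB]
            apply mul_le_mul_of_nonneg_right _ (norm_nonneg c)
            apply mul_le_mul_of_nonneg_right _ (Real.rpow_nonneg (div_nonneg hx.le hz.le) _)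
            rw [Kh]
            have h1 : (0:ℝ) ≤ KhA lam * (4:ℝ)^lam :=
              mul_nonneg (KhA_pos hlam).le (Real.rpow_nonneg (by norm_num) _)
            linarith

/-- The kernel
`ψ(t,x,y) = −t⁻¹ x^{−2λ} ∫₀^∞ ∫₀^x D(w,y,z) ∂_z[(z/t)^{2λ+1} φ(z/t)] w^{2λ} dw dz`. -/
def psiKer (lam : ℝ) (φ : ℝ → ℝ) (t x y : ℝ) : ℝ :=
  -(t⁻¹ * x ^ (-(2 * lam))) * ∫ z in Ioi (0 : ℝ), ∫ w in Ioo (0 : ℝ) x,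
    DKer lam w y z * deriv (fun z' => (z' / t) ^ (2 * lam + 1) * φ (z' / t)) z * w ^ (2 * lam)


/-- Bessel measure of the interval `I(x,r) = (x-r, x+r) ∩ (0,∞)`. -/
def mLambda (lam x r : ℝ) : ℝ :=
  ∫ u in Ioo (x - r) (x + r) ∩ Ioi (0 : ℝ), u ^ (2 * lam)

lemma deriv_formula {lam t : ℝ} (hlam : 0 < lam) (ht : 0 < t) {φ : ℝ → ℝ}
    (hφ : ContDiff ℝ (⊤ : ℕ∞) φ) (z : ℝ) :
    deriv (fun z' => (z' / t) ^ (2 * lam + 1) * φ (z' / t)) z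
      = (2 * lam + 1) * (z / t) ^ (2 * lam) * (1 / t) * φ (z / t)
        + (z / t) ^ (2 * lam + 1) * (deriv φ (z / t) * (1 / t)) := by
  have h1 : HasDerivAt (fun z' : ℝ => z' / t) (1 / t) z := by
    simpa using (hasDerivAt_id z).div_const t
  have h2 : HasDerivAt (fun u : ℝ => u ^ (2 * lam + 1))
      ((2 * lam + 1) * (z / t) ^ (2 * lam)) (z / t) := by
    have h := Real.hasDerivAt_rpow_const (x := z / t) (p := 2 * lam + 1) (Or.inr (by linarith))
    have e : 2 * lam + 1 - 1 = 2 * lam := by ring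
    rwa [e] at h
  have h3 : HasDerivAt (fun z' : ℝ => (z' / t) ^ (2 * lam + 1))
      ((2 * lam + 1) * (z / t) ^ (2 * lam) * (1 / t)) z := by
    have h := h2.comp z h1; exact h
  have h4 : HasDerivAt φ (deriv φ (z / t)) (z / t) :=
    ((hφ.differentiable (by simp)) (z / t)).hasDerivAt
  have h5 : HasDerivAt (fun z' : ℝ => φ (z' / t)) (deriv φ (z / t) * (1 / t)) z := h4.comp z h1
  exact (h3.mul h5).deriv

lemma final_bound {lam : ℝ} (hlam : 0 < lam) {t x : ℝ} (ht : 0 < t) (hx : 0 < x)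
    {K : ℝ} (hK : 0 ≤ K) :
    t⁻¹ * x ^ (-(2 * lam)) * K * min 1 ((x / t) ^ (2 * lam)) * (2 * t * (x + t) ^ (2 * lam))
      ≤ K * 2 ^ (2 * lam + 1) := by
  have hxneg : x ^ (-(2 * lam)) = (x⁻¹) ^ (2 * lam) := by
    rw [Real.rpow_neg hx.le, ← Real.inv_rpow hx.le]
  have hxt0 : (0:ℝ) ≤ x + t := by linarith
  have hG : x ^ (-(2 * lam)) * min 1 ((x / t) ^ (2 * lam)) * (x + t) ^ (2 * lam)
      ≤ 2 ^ (2 * lam) := by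
    rcases le_total x t with h | h
    · calc x ^ (-(2 * lam)) * min 1 ((x / t) ^ (2 * lam)) * (x + t) ^ (2 * lam)
          ≤ (x⁻¹) ^ (2 * lam) * ((x / t) ^ (2 * lam)) * (x + t) ^ (2 * lam) := by
            rw [hxneg]
            exact mul_le_mul_of_nonneg_right (mul_le_mul_of_nonneg_left (min_le_right _ _)
              (Real.rpow_nonneg (inv_nonneg.2 hx.le) _)) (Real.rpow_nonneg hxt0 _)
        _ = (x⁻¹ * (x / t) * (x + t)) ^ (2 * lam) := by
            rw [Real.mul_rpow (mul_nonneg (inv_nonneg.2 hx.le) (div_nonneg hx.le ht.le)) hxt0,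
              Real.mul_rpow (inv_nonneg.2 hx.le) (div_nonneg hx.le ht.le)]
        _ ≤ 2 ^ (2 * lam) := by
            apply Real.rpow_le_rpow (by positivity) _ (by linarith)
            have he : x⁻¹ * (x / t) * (x + t) = (x + t) / t := by
              field_simp
            rw [he, div_le_iff₀ ht]
            linarith
    · calc x ^ (-(2 * lam)) * min 1 ((x / t) ^ (2 * lam)) * (x + t) ^ (2 * lam)
          ≤ (x⁻¹) ^ (2 * lam) * 1 * (x + t) ^ (2 * lam) := by
            rw [hxneg]
            exact mul_le_mul_of_nonneg_right (mul_le_mul_of_nonneg_left (min_le_left _ _)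
              (Real.rpow_nonneg (inv_nonneg.2 hx.le) _)) (Real.rpow_nonneg hxt0 _)
        _ = (x⁻¹ * (x + t)) ^ (2 * lam) := by
            rw [mul_one, Real.mul_rpow (inv_nonneg.2 hx.le) hxt0]
        _ ≤ 2 ^ (2 * lam) := by
            apply Real.rpow_le_rpow (by positivity) _ (by linarith)
            have he : x⁻¹ * (x + t) = (x + t) / x := by field_simp
            rw [he, div_le_iff₀ hx]
            linarith
  have ht1 : t⁻¹ * t = 1 := inv_mul_cancel₀ ht.ne'
  have step : t⁻¹ * x ^ (-(2 * lam)) * K * min 1 ((x / t) ^ (2 * lam))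
      * (2 * t * (x + t) ^ (2 * lam))
      = 2 * K * (x ^ (-(2 * lam)) * min 1 ((x / t) ^ (2 * lam)) * (x + t) ^ (2 * lam)) := by
    calc t⁻¹ * x ^ (-(2 * lam)) * K * min 1 ((x / t) ^ (2 * lam))
        * (2 * t * (x + t) ^ (2 * lam))
        = (t⁻¹ * t) * (2 * K
            * (x ^ (-(2 * lam)) * min 1 ((x / t) ^ (2 * lam)) * (x + t) ^ (2 * lam))) := by ring
      _ = 2 * K * (x ^ (-(2 * lam)) * min 1 ((x / t) ^ (2 * lam)) * (x + t) ^ (2 * lam)) := by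
          rw [ht1, one_mul]
  rw [step]
  calc 2 * K * (x ^ (-(2 * lam)) * min 1 ((x / t) ^ (2 * lam)) * (x + t) ^ (2 * lam))
      ≤ 2 * K * (2 ^ (2 * lam)) := by
        apply mul_le_mul_of_nonneg_left hG (by linarith)
    _ = K * 2 ^ (2 * lam + 1) := by
        rw [Real.rpow_add_one (by norm_num : (2:ℝ) ≠ 0)]
        ring

set_option maxHeartbeats 1000000 in
/-- There is `C = C(λ,φ)` such that `|ψ(t,x,y)| ≤ C / m_λ(I(x,t))` for `|x−y| < t`. -/
theorem stmt8 (lam : ℝ) (hlam : 0 < lam) (φ : ℝ → ℝ)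
    (hφ : ContDiff ℝ (⊤ : ℕ∞) φ) (hφpos : ∀ x, 0 ≤ φ x)
    (hφsupp : Function.support φ ⊆ Ioo (0 : ℝ) 1)
    (hφnorm : ∫ x in Ioi (0 : ℝ), φ x * x ^ (2 * lam) = 1) :
    ∃ C : ℝ, 0 < C ∧ ∀ t x y : ℝ, 0 < t → 0 < x → 0 < y → |x - y| < t →
      |psiKer lam φ t x y| ≤ C / mLambda lam x t := by
  have hφcs : HasCompactSupport φ := by
    apply HasCompactSupport.intro isCompact_Icc (K := Icc (0:ℝ) 1)
    intro u hu
    by_contra h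
    exact hu (Ioo_subset_Icc_self (hφsupp (Function.mem_support.2 h)))
  obtain ⟨A, hA⟩ := hφcs.exists_bound_of_continuous hφ.continuous
  obtain ⟨B, hB⟩ := hφcs.deriv.exists_bound_of_continuous (hφ.continuous_deriv (by simp))
  have hA0 : 0 ≤ A := (norm_nonneg _).trans (hA 0)
  have hB0 : 0 ≤ B := (norm_nonneg _).trans (hB 0)
  set Cφ : ℝ := (2*lam+1)*A + B with hCφdef
  have hCφ0 : 0 ≤ Cφ := by
    have h1 : 0 ≤ (2*lam+1)*A := mul_nonneg (by linarith) hA0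
    rw [hCφdef]; linarith
  set K : ℝ := Kh lam * Cφ with hKdef
  have hK0 : 0 ≤ K := mul_nonneg (Kh_pos hlam).le hCφ0
  refine ⟨K * 2^(2*lam+1) + 1, by positivity, ?_⟩
  intro t x y ht hx hy hxy
  -- vanishing of φ and its derivative past 1
  have hφzero : ∀ u : ℝ, 1 < u → φ u = 0 := by
    intro u hu
    by_contra h
    exact absurd (hφsupp (Function.mem_support.2 h)).2 (by linarith)
  have hφ'zero : ∀ u : ℝ, 1 < u → deriv φ u = 0 := by
    intro u hu
    have hev : φ =ᶠ[nhds u] (fun _ => (0:ℝ)) := by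
      filter_upwards [isOpen_Ioi.mem_nhds (show u ∈ Ioi (1:ℝ) from hu)] with v hv
      exact hφzero v hv
    rw [hev.deriv_eq]
    exact deriv_const u 0
  -- pointwise bounds on the derivative term
  have hdb : ∀ z : ℝ, 0 < z → z < t →
      |deriv (fun z' => (z' / t) ^ (2 * lam + 1) * φ (z' / t)) z|
        ≤ Cφ * (1/t) * (z/t)^(2*lam) := by
    intro z hz hzt
    rw [deriv_formula hlam ht hφ z]
    have hu0 : 0 < z/t := div_pos hz ht
    have hu1 : z/t ≤ 1 := by rw [div_le_one ht]; linarith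
    have hT0 : 0 ≤ (z/t)^(2*lam) := Real.rpow_nonneg hu0.le _
    have hAz : |φ (z/t)| ≤ A := by rw [← Real.norm_eq_abs]; exact hA _
    have hBz : |deriv φ (z/t)| ≤ B := by rw [← Real.norm_eq_abs]; exact hB _
    have hpre0 : (0:ℝ) ≤ (2*lam+1) * (z/t)^(2*lam) * (1/t) := by positivity
    have b1 : |(2*lam+1) * (z/t)^(2*lam) * (1/t) * φ (z/t)|
        ≤ (2*lam+1)*A*((1/t)*((z/t)^(2*lam))) := by
      rw [abs_mul, abs_of_nonneg hpre0]
      calc (2*lam+1) * (z/t)^(2*lam) * (1/t) * |φ (z/t)|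
          ≤ (2*lam+1) * (z/t)^(2*lam) * (1/t) * A := mul_le_mul_of_nonneg_left hAz hpre0
        _ = (2*lam+1)*A*((1/t)*((z/t)^(2*lam))) := by ring
    have hexp : (z/t)^(2*lam+1) ≤ (z/t)^(2*lam) :=
      Real.rpow_le_rpow_of_exponent_ge hu0 hu1 (by linarith)
    have b2 : |(z/t)^(2*lam+1) * (deriv φ (z/t) * (1/t))|
        ≤ B*((1/t)*((z/t)^(2*lam))) := by
      rw [abs_mul, abs_of_nonneg (Real.rpow_nonneg hu0.le _), abs_mul,
        abs_of_nonneg (by positivity : (0:ℝ) ≤ 1/t)]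
      calc (z/t)^(2*lam+1) * (|deriv φ (z/t)| * (1/t))
          ≤ (z/t)^(2*lam) * (B * (1/t)) := by
            apply mul_le_mul hexp (mul_le_mul_of_nonneg_right hBz (by positivity))
              (mul_nonneg (abs_nonneg _) (by positivity)) hT0
        _ = B*((1/t)*((z/t)^(2*lam))) := by ring
    calc |(2*lam+1) * (z/t)^(2*lam) * (1/t) * φ (z/t)
          + (z/t)^(2*lam+1) * (deriv φ (z/t) * (1/t))|
        ≤ |(2*lam+1) * (z/t)^(2*lam) * (1/t) * φ (z/t)|
          + |(z/t)^(2*lam+1) * (deriv φ (z/t) * (1/t))| := abs_add_le _ _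
      _ ≤ (2*lam+1)*A*((1/t)*((z/t)^(2*lam))) + B*((1/t)*((z/t)^(2*lam))) := add_le_add b1 b2
      _ = Cφ * (1/t) * (z/t)^(2*lam) := by rw [hCφdef]; ring
  have hdz : ∀ z : ℝ, t < z →
      deriv (fun z' => (z' / t) ^ (2 * lam + 1) * φ (z' / t)) z = 0 := by
    intro z hz
    have hu : 1 < z/t := (one_lt_div ht).2 hz
    rw [deriv_formula hlam ht hφ z, hφzero _ hu, hφ'zero _ hu]
    ring
  -- measure of the interval
  set S : Set ℝ := Ioo (x - t) (x + t) ∩ Ioi (0:ℝ) with hSdef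
  have hSmeas : MeasurableSet S := measurableSet_Ioo.inter measurableSet_Ioi
  have hSfin : volume S < ⊤ :=
    lt_of_le_of_lt (measure_mono inter_subset_left)
      (by rw [Real.volume_Ioo]; exact ENNReal.ofReal_lt_top)
  have hfS : IntegrableOn (fun u : ℝ => u ^ (2*lam)) S := by
    apply Measure.integrableOn_of_bounded (M := (x+t)^(2*lam)) hSfin.ne
      ((by fun_prop : Measurable fun u : ℝ => u ^ (2*lam)).aestronglyMeasurable)
    filter_upwards [ae_restrict_mem hSmeas] with u hu
    rw [Real.norm_eq_abs, abs_of_nonneg (Real.rpow_nonneg (le_of_lt hu.2) _)]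
    exact Real.rpow_le_rpow (le_of_lt hu.2) hu.1.2.le (by linarith)
  have hm_pos : 0 < mLambda lam x t := by
    have hsub1 : Ioo x (x+t) ⊆ S := fun u hu => ⟨⟨by linarith [hu.1], hu.2⟩, lt_trans hx hu.1⟩
    have hconst : ∫ _ in Ioo x (x+t), x^(2*lam) = t * x^(2*lam) := by
      rw [setIntegral_const, measureReal_def, Real.volume_Ioo, smul_eq_mul]
      congr 1
      rw [show x + t - x = t by ring, ENNReal.toReal_ofReal ht.le]
    have h2 : ∫ _ in Ioo x (x+t), x^(2*lam) ≤ ∫ u in Ioo x (x+t), u^(2*lam) := by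
      apply setIntegral_mono_on (integrableOn_const
        (by rw [Real.volume_Ioo]; exact ENNReal.ofReal_ne_top))
        (hfS.mono_set hsub1) measurableSet_Ioo
      intro u hu
      exact Real.rpow_le_rpow hx.le hu.1.le (by linarith)
    have h3 : ∫ u in Ioo x (x+t), u^(2*lam) ≤ ∫ u in S, u^(2*lam) := by
      apply setIntegral_mono_set hfS
      · filter_upwards [ae_restrict_mem hSmeas] with u hu
        exact Real.rpow_nonneg (le_of_lt hu.2) _
      · exact HasSubset.Subset.eventuallyLE hsub1
    have h0 : 0 < t * x^(2*lam) := mul_pos ht (Real.rpow_pos_of_pos hx _)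
    rw [mLambda]
    calc (0:ℝ) < t * x^(2*lam) := h0
      _ = ∫ _ in Ioo x (x+t), x^(2*lam) := hconst.symm
      _ ≤ ∫ u in Ioo x (x+t), u^(2*lam) := h2
      _ ≤ ∫ u in S, u^(2*lam) := h3
  have hm_le : mLambda lam x t ≤ 2*t*((x+t)^(2*lam)) := by
    have hbd := norm_setIntegral_le_of_norm_le_const (μ := volume) (s := S)
      (f := fun u : ℝ => u ^ (2*lam)) (C := (x+t)^(2*lam)) hSfin
      (fun u hu => by
        rw [Real.norm_eq_abs, abs_of_nonneg (Real.rpow_nonneg (le_of_lt hu.2) _)]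
        exact Real.rpow_le_rpow (le_of_lt hu.2) hu.1.2.le (by linarith))
    have htr : (volume S).toReal ≤ 2*t := by
      apply ENNReal.toReal_le_of_le_ofReal (by linarith)
      calc volume S ≤ volume (Ioo (x-t) (x+t)) := measure_mono inter_subset_left
        _ = ENNReal.ofReal (2*t) := by rw [Real.volume_Ioo]; congr 1; ring
    calc mLambda lam x t ≤ |mLambda lam x t| := le_abs_self _
      _ = ‖∫ u in S, u^(2*lam)‖ := by rw [mLambda, Real.norm_eq_abs]
      _ ≤ (x+t)^(2*lam) * (volume S).toReal := hbd
      _ ≤ (x+t)^(2*lam) * (2*t) :=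
          mul_le_mul_of_nonneg_left htr (Real.rpow_nonneg (by linarith) _)
      _ = 2*t*((x+t)^(2*lam)) := by ring
  -- bound on the double integral
  have hIbound : ‖∫ z in Ioi (0:ℝ), ∫ w in Ioo (0:ℝ) x, DKer lam w y z
      * deriv (fun z' => (z' / t) ^ (2 * lam + 1) * φ (z' / t)) z * w ^ (2 * lam)‖
      ≤ K * min 1 ((x/t)^(2*lam)) := by
    set d : ℝ → ℝ := fun z => deriv (fun z' => (z' / t) ^ (2 * lam + 1) * φ (z' / t)) z
      with hddef
    set Ψ : ℝ → ℝ := fun z => (Ioo (0:ℝ) t).indicator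
        (fun z => K * (1/t) * ((z/t)^(2*lam) * min 1 ((x/z)^(2*lam)))) z with hΨdef
    have hΨ0 : ∀ z, 0 ≤ Ψ z := by
      intro z
      apply Set.indicator_nonneg
      intro a ha
      have h1 : 0 ≤ (a/t)^(2*lam) := Real.rpow_nonneg (div_nonneg ha.1.le ht.le) _
      have h2 : 0 ≤ min 1 ((x/a)^(2*lam)) := min_nonneg' (div_nonneg hx.le ha.1.le)
      positivity
    have hio : IntegrableOn (fun z : ℝ => K * (1/t) * ((z/t)^(2*lam) * min 1 ((x/z)^(2*lam))))
        (Ioo (0:ℝ) t) := by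
      apply Measure.integrableOn_of_bounded (M := K * (1/t))
        (by rw [Real.volume_Ioo]; exact ENNReal.ofReal_ne_top)
        ((by fun_prop : Measurable fun z : ℝ =>
          K * (1/t) * ((z/t)^(2*lam) * min 1 ((x/z)^(2*lam)))).aestronglyMeasurable)
      filter_upwards [ae_restrict_mem measurableSet_Ioo] with z hzm
      have h1 : (z/t)^(2*lam) ≤ 1 :=
        Real.rpow_le_one (div_nonneg hzm.1.le ht.le)
          (by rw [div_le_one ht]; exact hzm.2.le) (by linarith)
      have h2 : 0 ≤ min 1 ((x/z)^(2*lam)) := min_nonneg' (div_nonneg hx.le hzm.1.le)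
      have h3 : (z/t)^(2*lam) * min 1 ((x/z)^(2*lam)) ≤ 1 :=
        mul_le_one₀ h1 h2 (min_le_left _ _)
      have h4 : 0 ≤ (z/t)^(2*lam) := Real.rpow_nonneg (div_nonneg hzm.1.le ht.le) _
      rw [Real.norm_eq_abs, abs_of_nonneg (by positivity)]
      exact mul_le_of_le_one_right (by positivity) h3
    have hΨint : Integrable Ψ (volume.restrict (Ioi (0:ℝ))) :=
      ((integrable_indicator_iff measurableSet_Ioo).2 hio).restrict
    have haet : ∀ᵐ z ∂(volume.restrict (Ioi (0:ℝ))), z ≠ t := by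
      refine ae_restrict_of_ae (ae_iff.2 ?_)
      have h : {z : ℝ | ¬ z ≠ t} = {t} := by ext z; simp
      rw [h, Real.volume_singleton]
    have hdom : (fun z => ‖∫ w in Ioo (0:ℝ) x, DKer lam w y z * d z * w ^ (2*lam)‖)
        ≤ᵐ[volume.restrict (Ioi (0:ℝ))] Ψ := by
      filter_upwards [haet, ae_restrict_mem measurableSet_Ioi] with z hzt hz
      rcases lt_or_gt_of_ne hzt with hlt | hgt
      · have hmem : z ∈ Ioo (0:ℝ) t := ⟨hz, hlt⟩
        rw [hΨdef]
        simp only [Set.indicator_of_mem hmem]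
        calc ‖∫ w in Ioo (0:ℝ) x, DKer lam w y z * d z * w ^ (2*lam)‖
            ≤ Kh lam * min 1 ((x/z)^(2*lam)) * ‖d z‖ := hKey hlam hx hy hz (d z)
          _ ≤ Kh lam * min 1 ((x/z)^(2*lam)) * (Cφ * (1/t) * (z/t)^(2*lam)) := by
              apply mul_le_mul_of_nonneg_left _
                (mul_nonneg (Kh_pos hlam).le (min_nonneg' (div_nonneg hx.le hz.le)))
              rw [Real.norm_eq_abs]
              exact hdb z hz hlt
          _ = K * (1/t) * ((z/t)^(2*lam) * min 1 ((x/z)^(2*lam))) := by rw [hKdef]; ring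
      · have hd0 : d z = 0 := hdz z hgt
        simp only [hd0, mul_zero, zero_mul, integral_zero, norm_zero]
        exact hΨ0 z
    have hstep : ∫ z in Ioi (0:ℝ), ‖∫ w in Ioo (0:ℝ) x, DKer lam w y z * d z * w ^ (2*lam)‖
        ≤ ∫ z in Ioi (0:ℝ), Ψ z :=
      integral_mono_of_nonneg (Filter.Eventually.of_forall fun z => norm_nonneg _) hΨint hdom
    have hΨval : ∫ z in Ioi (0:ℝ), Ψ z ≤ K * min 1 ((x/t)^(2*lam)) := by
      have hsub : Ioo (0:ℝ) t ⊆ Ioi (0:ℝ) := fun u hu => hu.1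
      rw [hΨdef, integral_indicator measurableSet_Ioo,
        Measure.restrict_restrict measurableSet_Ioo, Set.inter_eq_left.mpr hsub]
      have hpt : ∀ z ∈ Ioo (0:ℝ) t,
          K * (1/t) * ((z/t)^(2*lam) * min 1 ((x/z)^(2*lam)))
            ≤ K * (1/t) * (min 1 ((x/t)^(2*lam))) := by
        intro z hzm
        apply mul_le_mul_of_nonneg_left _ (by positivity)
        refine le_min ?_ ?_
        · exact mul_le_one₀ (Real.rpow_le_one (div_nonneg hzm.1.le ht.le)
            (by rw [div_le_one ht]; exact hzm.2.le) (by linarith))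
            (min_nonneg' (div_nonneg hx.le hzm.1.le)) (min_le_left _ _)
        · calc (z/t)^(2*lam) * min 1 ((x/z)^(2*lam))
              ≤ (z/t)^(2*lam) * ((x/z)^(2*lam)) :=
                mul_le_mul_of_nonneg_left (min_le_right _ _)
                  (Real.rpow_nonneg (div_nonneg hzm.1.le ht.le) _)
            _ = (x/t)^(2*lam) := by
                rw [← Real.mul_rpow (div_nonneg hzm.1.le ht.le) (div_nonneg hx.le hzm.1.le)]
                congr 1
                rw [div_mul_div_comm, mul_comm t z, mul_div_mul_left _ _ (ne_of_gt hzm.1)]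
      have hmono := setIntegral_mono_on hio (integrableOn_const
          (by rw [Real.volume_Ioo]; exact ENNReal.ofReal_ne_top)) measurableSet_Ioo hpt
      refine hmono.trans ?_
      rw [setIntegral_const, measureReal_def, Real.volume_Ioo, smul_eq_mul]
      rw [show t - 0 = t by ring, ENNReal.toReal_ofReal ht.le]
      have e : t * (K * (1/t) * (min 1 ((x/t)^(2*lam)))) = K * min 1 ((x/t)^(2*lam)) := by
        field_simp
      rw [e]
    calc ‖∫ z in Ioi (0:ℝ), ∫ w in Ioo (0:ℝ) x, DKer lam w y z * d z * w ^ (2*lam)‖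
        ≤ ∫ z in Ioi (0:ℝ), ‖∫ w in Ioo (0:ℝ) x, DKer lam w y z * d z * w ^ (2*lam)‖ :=
          norm_integral_le_integral_norm _
      _ ≤ ∫ z in Ioi (0:ℝ), Ψ z := hstep
      _ ≤ K * min 1 ((x/t)^(2*lam)) := hΨval
  -- conclusion
  have hc : (0:ℝ) < t⁻¹ * x ^ (-(2*lam)) := by
    have := Real.rpow_pos_of_pos hx (-(2*lam))
    positivity
  have habs : |psiKer lam φ t x y| ≤ (t⁻¹ * x ^ (-(2*lam))) * (K * min 1 ((x/t)^(2*lam))) := by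
    rw [psiKer, abs_mul, abs_neg, abs_of_pos hc]
    apply mul_le_mul_of_nonneg_left _ hc.le
    rw [← Real.norm_eq_abs]
    exact hIbound
  rw [le_div_iff₀ hm_pos]
  have hb0 : 0 ≤ (t⁻¹ * x ^ (-(2*lam))) * (K * min 1 ((x/t)^(2*lam))) :=
    mul_nonneg hc.le (mul_nonneg hK0 (min_nonneg' (div_nonneg hx.le ht.le)))
  calc |psiKer lam φ t x y| * mLambda lam x t
      ≤ ((t⁻¹ * x ^ (-(2*lam))) * (K * min 1 ((x/t)^(2*lam)))) * (2*t*((x+t)^(2*lam))) :=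
        mul_le_mul habs hm_le hm_pos.le hb0
    _ = t⁻¹ * x ^ (-(2 * lam)) * K * min 1 ((x / t) ^ (2 * lam))
        * (2 * t * (x + t) ^ (2 * lam)) := by ring
    _ ≤ K * 2 ^ (2*lam+1) := final_bound hlam ht hx hK0
    _ ≤ K * 2^(2*lam+1) + 1 := by linarith
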